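/- arXiv:1208.5361 — 7 statements merged into one kernel-verified Lean document; each statement's English description precedes it below -/
import Mathlib

section
/- Let n ≥ 1 and let f : ℝⁿ → ℝ be a smooth convex function with f(0) = 0, ∇f(0) = 0, and positive definite Hessian D²f(0). Then lim_{t → 0⁺} t^{-n/2} · vol({x ∈ ℝⁿ : f(x) < t}) = (√2)ⁿ · ω_n / √(det D²f(0)). -/
/-!
By Taylor's theorem `f x = ½ ⟪x, H x⟫ + o(‖x‖²)` with `H = D²f(0)`, so for every `ε > 0` the
function `f` lies between `(1 ∓ ε)/2` times the quadratic form near the origin. Convexity and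
`f 0 = 0` force `f` to stay bounded below away from that neighbourhood, so for small `t` the
sublevel set `{f < t}` is squeezed between the ellipsoids `{⟪x, H x⟫ < 2t/(1 ± ε)}`. The ellipsoid
`{⟪x, H x⟫ < s}` is the preimage of the ball of radius `√s` under `√H`, hence has volume
`s^{n/2} ω_n / √(det H)`; letting `ε → 0` gives the limit.
-/

open MeasureTheory Filter Asymptotics Set
open scoped RealInnerProductSpace Topology

/-- The Hessian matrix of `f : ℝⁿ → ℝ` at a point `x`, with entries the second
partial derivatives of `f`. -/
noncomputable def hessianMatrix {n : ℕ} (f : EuclideanSpace ℝ (Fin n) → ℝ)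
    (x : EuclideanSpace ℝ (Fin n)) : Matrix (Fin n) (Fin n) ℝ :=
  Matrix.of fun i j =>
    iteratedFDeriv ℝ 2 f x ![EuclideanSpace.single i 1, EuclideanSpace.single j 1]

section Taylor

variable {E F : Type*} [NormedAddCommGroup E] [NormedSpace ℝ E]
  [NormedAddCommGroup F] [NormedSpace ℝ F]

theorem ContDiff.isLittleO_sub_taylor_two {f : E → F} (hf : ContDiff ℝ 2 f) :
    (fun x => f x - f 0 - fderiv ℝ f 0 x - (2 : ℝ)⁻¹ • fderiv ℝ (fderiv ℝ f) 0 x x)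
      =o[𝓝 0] fun x => ‖x‖ ^ 2 := by
  set B := fderiv ℝ (fderiv ℝ f) 0
  have hsymm : ∀ v w, B v w = B w v := hf.contDiffAt.isSymmSndFDerivAt (by simp)
  have hf' : ∀ y, HasFDerivAt (fderiv ℝ f) (fderiv ℝ (fderiv ℝ f) y) y := fun y =>
    ((hf.fderiv_right (m := 1) le_rfl).differentiable one_ne_zero y).hasFDerivAt
  have hderiv : ∀ y ∈ univ, HasFDerivWithinAt
      (fun x => f x - f 0 - fderiv ℝ f 0 x - (2 : ℝ)⁻¹ • B x x)
      (fderiv ℝ f y - fderiv ℝ f 0 - B y) univ y := by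
    intro y _
    have hB := B.hasFDerivAt_of_bilinear (hasFDerivAt_id y) (hasFDerivAt_id y)
    have hrem := ((((hf.differentiable (by simp) y).hasFDerivAt).sub_const (f 0)).sub
      (fderiv ℝ f 0).hasFDerivAt).sub (hB.const_smul (2 : ℝ)⁻¹)
    -- `B` is symmetric, so `x ↦ B x x / 2` has derivative `B y` at `y`
    convert hrem.hasFDerivWithinAt using 1
    · rfl
    · ext h
      simp only [sub_apply, smul_apply, add_apply, ContinuousLinearMap.precompR_apply,
        ContinuousLinearMap.precompL_apply, ContinuousLinearMap.compL_apply,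
        ContinuousLinearMap.comp_id, ContinuousLinearMap.id_apply, id, hsymm h y]
      module
  have hsmall : (fun y => fderiv ℝ f y - fderiv ℝ f 0 - B y) =o[𝓝[univ] 0]
      fun y => ‖y - 0‖ ^ 1 := by
    simpa using (hasFDerivAt_iff_isLittleO_nhds_zero.1 (hf' 0)).norm_right
  simpa using convex_univ.isLittleO_pow_succ (mem_univ 0) hderiv hsmall

end Taylor

theorem tendsto_of_forall_eventually_mem_Icc {α γ β : Type*} [TopologicalSpace β] [LinearOrder β]
    [OrderTopology β] {l : Filter α} {l' : Filter γ} [l'.NeBot] {F : α → β} {a b : γ → β}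
    {L : β} (ha : Tendsto a l' (𝓝 L)) (hb : Tendsto b l' (𝓝 L))
    (h : ∀ᶠ ε in l', ∀ᶠ t in l, F t ∈ Icc (a ε) (b ε)) : Tendsto F l (𝓝 L) := by
  refine tendsto_order.2 ⟨fun L' hL' => ?_, fun L' hL' => ?_⟩
  · obtain ⟨ε, haε, hε⟩ := ((ha.eventually (lt_mem_nhds hL')).and h).exists
    filter_upwards [hε] with t ht using haε.trans_le ht.1
  · obtain ⟨ε, hbε, hε⟩ := ((hb.eventually (gt_mem_nhds hL')).and h).exists
    filter_upwards [hε] with t ht using ht.2.trans_lt hbε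

section Convex

variable {E : Type*} [NormedAddCommGroup E] [NormedSpace ℝ E] {f : E → ℝ}

theorem ConvexOn.le_of_le_on_sphere (hf : ConvexOn ℝ univ f) (hf0 : f 0 = 0) {δ m : ℝ}
    (hδ : 0 < δ) (hm : 0 ≤ m) (hsphere : ∀ y, ‖y‖ = δ → m ≤ f y) {x : E} (hx : δ ≤ ‖x‖) :
    m ≤ f x := by
  have hx₀ : 0 < ‖x‖ := hδ.trans_le hx
  set θ := δ / ‖x‖
  have hθ₀ : 0 < θ := by positivity
  have hθ₁ : θ ≤ 1 := (div_le_one hx₀).2 hx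
  have hnorm : ‖θ • x‖ = δ := by
    rw [norm_smul, Real.norm_of_nonneg hθ₀.le, div_mul_cancel₀ _ hx₀.ne']
  have hchord : f (θ • x) ≤ θ * f x := by
    simpa [hf0] using hf.2 (mem_univ x) (mem_univ 0) hθ₀.le (sub_nonneg.2 hθ₁) (by ring)
  have hθf : m ≤ θ * f x := (hsphere _ hnorm).trans hchord
  have hfx : 0 ≤ f x := nonneg_of_mul_nonneg_right (hm.trans hθf) hθ₀
  exact hθf.trans (mul_le_of_le_one_left hfx hθ₁)

theorem ConvexOn.eventually_sublevel_sandwich (hf : ConvexOn ℝ univ f) (hf0 : f 0 = 0)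
    {q : E → ℝ} {c ε : ℝ} (hc : 0 < c) (hq : ∀ x, c * ‖x‖ ^ 2 ≤ q x) (hε₀ : 0 ≤ ε) (hε₁ : ε < 1)
    (hfq : ∀ᶠ x in 𝓝 0, |2 * f x - q x| ≤ ε * q x) :
    ∀ᶠ t in 𝓝[>] 0, {x | q x < 2 * t / (1 + ε)} ⊆ {x | f x < t} ∧
      {x | f x < t} ⊆ {x | q x < 2 * t / (1 - ε)} := by
  obtain ⟨r, hr, hloc⟩ : ∃ r > 0, ∀ x : E, ‖x‖ ≤ r →
      (1 - ε) * q x ≤ 2 * f x ∧ 2 * f x ≤ (1 + ε) * q x := by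
    obtain ⟨δ, hδ, hball⟩ := Metric.eventually_nhds_iff_ball.1 hfq
    refine ⟨δ / 2, half_pos hδ, fun x hx => ?_⟩
    have := abs_le.1 (hball x (by rw [mem_ball_zero_iff]; linarith))
    constructor <;> linarith
  set m := (1 - ε) * (c * r ^ 2) / 2 with hm_def
  have hm : 0 < m := by
    have : 0 < 1 - ε := by linarith
    positivity
  have hout : ∀ x : E, r ≤ ‖x‖ → m ≤ f x := fun x => hf.le_of_le_on_sphere hf0 hr hm.le
    fun y hy => by
      have h1 := (hloc y hy.le).1
      have h2 : (1 - ε) * (c * r ^ 2) ≤ (1 - ε) * q y :=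
        mul_le_mul_of_nonneg_left (hy ▸ hq y) (by linarith)
      linarith [hm_def]
  filter_upwards [Ioo_mem_nhdsGT hm] with t ⟨ht₀, htm⟩
  constructor
  · intro x (hx : q x < 2 * t / (1 + ε))
    show f x < t
    have hqx : q x < 2 * t := hx.trans_le (div_le_self (by linarith) (by linarith))
    have hxr : ‖x‖ ≤ r := by
      by_contra! hxr
      have : c * r ^ 2 < c * ‖x‖ ^ 2 := by gcongr
      nlinarith [hq x, hm_def]
    have := (hloc x hxr).2
    rw [lt_div_iff₀ (by linarith)] at hx
    linarith
  · intro x (hx : f x < t)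
    show q x < 2 * t / (1 - ε)
    have hxr : ‖x‖ ≤ r := by
      by_contra! hxr
      linarith [hout x hxr.le]
    have := (hloc x hxr).1
    rw [lt_div_iff₀ (by linarith)]
    linarith

end Convex

theorem Real.rpow_neg_half_mul_sqrt_mul_pow {t : ℝ} (ht : 0 < t) (s : ℝ) (N : ℕ) :
    t ^ (-(N : ℝ) / 2) * √(t * s) ^ N = √s ^ N := by
  rw [Real.sqrt_mul ht.le, mul_pow, ← mul_assoc, Real.sqrt_eq_rpow, ← Real.rpow_natCast,
    ← Real.rpow_mul ht.le, ← Real.rpow_add ht, show -(N : ℝ) / 2 + 1 / 2 * N = 0 by ring,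
    Real.rpow_zero, one_mul]

section Quadratic

open Matrix
open scoped MatrixOrder

variable {ι : Type*} [Fintype ι] [DecidableEq ι] {M : Matrix ι ι ℝ}

theorem Matrix.PosSemidef.inner_toEuclideanLin_self (hM : M.PosSemidef) (x : EuclideanSpace ℝ ι) :
    ⟪x, toEuclideanLin M x⟫ = ‖toEuclideanLin (CFC.sqrt M) x‖ ^ 2 := by
  have hS : (toEuclideanLin (CFC.sqrt M)).IsSymmetric :=
    isSymmetric_toEuclideanLin_iff.2 (nonneg_iff_posSemidef.1 (CFC.sqrt_nonneg M)).1
  have hMx : toEuclideanLin M x =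
      toEuclideanLin (CFC.sqrt M) (toEuclideanLin (CFC.sqrt M) x) := by
    conv_lhs => rw [← CFC.sqrt_mul_sqrt_self M hM.nonneg]
    simp [toLpLin_apply, mulVec_mulVec]
  rw [hMx, ← hS, real_inner_self_eq_norm_sq]

theorem Matrix.PosSemidef.det_sqrt_eq_sqrt_det (hM : M.PosSemidef) :
    (CFC.sqrt M).det = √M.det := by
  simpa using det_sqrt hM

theorem Matrix.PosDef.det_toEuclideanLin_sqrt_ne_zero (hM : M.PosDef) :
    LinearMap.det (toEuclideanLin (CFC.sqrt M)) ≠ 0 := by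
  simpa [hM.posSemidef.det_sqrt_eq_sqrt_det] using (Real.sqrt_pos.2 hM.det_pos).ne'

theorem Matrix.PosDef.exists_mul_norm_sq_le_inner (hM : M.PosDef) :
    ∃ c > 0, ∀ x : EuclideanSpace ℝ ι, c * ‖x‖ ^ 2 ≤ ⟪x, toEuclideanLin M x⟫ := by
  have hinj := (LinearMap.equivOfDetNeZero _ hM.det_toEuclideanLin_sqrt_ne_zero).injective
  obtain ⟨K, -, hK⟩ :=
    (toEuclideanLin (CFC.sqrt M)).exists_antilipschitzWith (LinearMap.ker_eq_bot.2 hinj)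
  obtain ⟨c, hc, hcS⟩ := antilipschitzWith_iff_exists_mul_le_norm.1 ⟨K, hK⟩
  refine ⟨c ^ 2, by positivity, fun x => ?_⟩
  rw [hM.posSemidef.inner_toEuclideanLin_self, ← mul_pow]
  exact pow_le_pow_left₀ (by positivity) (hcS x) 2

theorem Matrix.PosDef.volume_inner_toEuclideanLin_lt (hM : M.PosDef) {s : ℝ} (hs : 0 < s) :
    volume {x : EuclideanSpace ℝ ι | ⟪x, toEuclideanLin M x⟫ < s} =
      ENNReal.ofReal (√s ^ Fintype.card ι / √M.det) *
        volume (Metric.ball (0 : EuclideanSpace ℝ ι) 1) := by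
  have hset : {x : EuclideanSpace ℝ ι | ⟪x, toEuclideanLin M x⟫ < s} =
      toEuclideanLin (CFC.sqrt M) ⁻¹' Metric.ball 0 √s := by
    ext x
    simp [hM.posSemidef.inner_toEuclideanLin_self, Real.lt_sqrt]
  rw [hset, Measure.addHaar_preimage_linearMap _ hM.det_toEuclideanLin_sqrt_ne_zero,
    Measure.addHaar_ball_of_pos _ _ (Real.sqrt_pos.2 hs), finrank_euclideanSpace, ← mul_assoc,
    ← ENNReal.ofReal_mul (abs_nonneg _)]
  simp [hM.posSemidef.det_sqrt_eq_sqrt_det, abs_of_pos (Real.sqrt_pos.2 hM.det_pos), div_eq_inv_mul]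

theorem ContinuousLinearMap.apply_eq_inner_toEuclideanLin
    (B : EuclideanSpace ℝ ι →L[ℝ] EuclideanSpace ℝ ι →L[ℝ] ℝ) (x y : EuclideanSpace ℝ ι) :
    B x y = ⟪x, toEuclideanLin
      (Matrix.of fun i j => B (EuclideanSpace.single i 1) (EuclideanSpace.single j 1)) y⟫ := by
  have h := congrArg (fun B' => B' x y) (Matrix.toLinearMap₂_toMatrix₂
    (EuclideanSpace.basisFun ι ℝ).toBasis (EuclideanSpace.basisFun ι ℝ).toBasis B.toLinearMap₁₂)
  simp only [Matrix.toLinearMap₂_apply, LinearMap.toMatrix₂_apply,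
    ContinuousLinearMap.toLinearMap₁₂_apply_apply_apply] at h
  refine h.symm.trans ?_
  simp only [PiLp.inner_apply, toLpLin_apply, mulVec, dotProduct]
  simp only [OrthonormalBasis.coe_toBasis_repr_apply, EuclideanSpace.basisFun_repr,
    OrthonormalBasis.coe_toBasis, EuclideanSpace.basisFun_apply, smul_eq_mul, of_apply,
    RCLike.inner_apply, conj_trivial, Finset.sum_mul]
  exact Finset.sum_congr rfl fun i _ => Finset.sum_congr rfl fun j _ => by ring

theorem Matrix.PosDef.tendsto_rpow_mul_volume_setOf_lt {f : EuclideanSpace ℝ ι → ℝ}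
    (hf : ConvexOn ℝ univ f) (hf0 : f 0 = 0) (hM : M.PosDef)
    (hfM : (fun x => f x - ⟪x, toEuclideanLin M x⟫ / 2) =o[𝓝 0] fun x => ‖x‖ ^ 2) :
    Tendsto (fun t : ℝ => t ^ (-(Fintype.card ι : ℝ) / 2) * (volume {x | f x < t}).toReal)
      (𝓝[>] 0)
      (𝓝 (√2 ^ Fintype.card ι * (volume (Metric.ball (0 : EuclideanSpace ℝ ι) 1)).toReal /
        √M.det)) := by
  set N := Fintype.card ι
  set q : EuclideanSpace ℝ ι → ℝ := fun x => ⟪x, toEuclideanLin M x⟫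
  set K := (volume (Metric.ball (0 : EuclideanSpace ℝ ι) 1)).toReal / √M.det
  obtain ⟨c, hc, hcq⟩ := hM.exists_mul_norm_sq_le_inner
  have hvol_ne_top : ∀ s > 0, volume {x | q x < s} ≠ ⊤ := fun s hs => by
    rw [hM.volume_inner_toEuclideanLin_lt hs]
    exact ENNReal.mul_ne_top ENNReal.ofReal_ne_top measure_ball_lt_top.ne
  have hscale : ∀ t > 0, ∀ s > 0,
      t ^ (-(N : ℝ) / 2) * (volume {x | q x < t * s}).toReal = √s ^ N * K := fun t ht s hs => by
    rw [hM.volume_inner_toEuclideanLin_lt (mul_pos ht hs), ENNReal.toReal_mul, ENNReal.toReal_ofReal (by positivity),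
      ← Real.rpow_neg_half_mul_sqrt_mul_pow ht s N]
    ring
  have hrel : ∀ ε > 0, ∀ᶠ x in 𝓝 0, |2 * f x - q x| ≤ ε * q x := fun ε hε => by
    filter_upwards [hfM.def (by positivity : 0 < ε * c / 2)] with x hx
    have := hcq x
    rw [Real.norm_eq_abs, norm_pow, norm_norm] at hx
    calc |2 * f x - q x| = 2 * |f x - q x / 2| := by
          rw [show 2 * f x - q x = 2 * (f x - q x / 2) by ring, abs_mul, abs_two]
      _ ≤ ε * q x := by nlinarith
  have hbound : ∀ a : ℝ, Tendsto (fun ε : ℝ => √(2 / (1 + a * ε)) ^ N * K)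
      (𝓝[>] 0) (𝓝 (√2 ^ N * (volume (Metric.ball (0 : EuclideanSpace ℝ ι) 1)).toReal /
        √M.det)) := fun a => by
    have hcont : ContinuousAt (fun ε : ℝ => √(2 / (1 + a * ε)) ^ N * K) 0 := by
      fun_prop (disch := norm_num)
    convert hcont.tendsto.mono_left nhdsWithin_le_nhds using 2
    simp [K, mul_div_assoc]
  refine tendsto_of_forall_eventually_mem_Icc (hbound 1) (hbound (-1)) ?_
  filter_upwards [Ioo_mem_nhdsGT one_pos] with ε ⟨hε₀, hε₁⟩
  filter_upwards [hf.eventually_sublevel_sandwich hf0 hc hcq hε₀.le hε₁ (hrel ε hε₀),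
    self_mem_nhdsWithin] with t ⟨hinner, houter⟩ (ht : 0 < t)
  have hlo : 0 < 2 / (1 + ε) := by positivity
  have hhi : 0 < 2 / (1 - ε) := div_pos two_pos (by linarith)
  rw [show 2 * t / (1 + ε) = t * (2 / (1 + ε)) by ring] at hinner
  rw [show 2 * t / (1 - ε) = t * (2 / (1 - ε)) by ring] at houter
  have hfin := hvol_ne_top _ (mul_pos ht hhi)
  constructor
  · rw [one_mul, ← hscale t ht _ hlo]
    gcongr
    exact measure_ne_top_of_subset houter hfin
  · rw [neg_one_mul, ← sub_eq_add_neg, ← hscale t ht _ hhi]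
    gcongr

end Quadratic

theorem area_section_limit_general (n : ℕ) (f : EuclideanSpace ℝ (Fin n) → ℝ)
    (hf : ContDiff ℝ (⊤ : ℕ∞) f) (hconv : ConvexOn ℝ Set.univ f)
    (hf0 : f 0 = 0) (hgrad : gradient f 0 = 0)
    (hhess : (hessianMatrix f 0).PosDef) :
    Tendsto (fun t : ℝ => t ^ (-(n : ℝ) / 2) * (volume {x | f x < t}).toReal)
      (𝓝[>] 0)
      (𝓝 (Real.sqrt 2 ^ n *
        (volume (Metric.ball (0 : EuclideanSpace ℝ (Fin n)) 1)).toReal /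
        Real.sqrt (hessianMatrix f 0).det)) := by
  have hfderiv : fderiv ℝ f 0 = 0 := by
    simpa [gradient] using hgrad
  have hquad : ∀ x, fderiv ℝ (fderiv ℝ f) 0 x x =
      ⟪x, Matrix.toEuclideanLin (hessianMatrix f 0) x⟫ := fun x => by
    convert (fderiv ℝ (fderiv ℝ f) 0).apply_eq_inner_toEuclideanLin x x using 4
    ext i j
    simp [hessianMatrix, iteratedFDeriv_two_apply]
  have htaylor : (fun x => f x - ⟪x, Matrix.toEuclideanLin (hessianMatrix f 0) x⟫ / 2)
      =o[𝓝 0] fun x => ‖x‖ ^ 2 := by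
    simpa [hf0, hfderiv, hquad, div_eq_inv_mul] using
      (hf.of_le (by norm_cast)).isLittleO_sub_taylor_two
  simpa using hhess.tendsto_rpow_mul_volume_setOf_lt hconv hf0 htaylor

theorem area_section_limit (n : ℕ) (hn : 1 ≤ n) (f : EuclideanSpace ℝ (Fin n) → ℝ)
    (hf : ContDiff ℝ (⊤ : ℕ∞) f) (hconv : ConvexOn ℝ Set.univ f)
    (hf0 : f 0 = 0) (hgrad : gradient f 0 = 0)
    (hhess : (hessianMatrix f 0).PosDef) :
    Tendsto (fun t : ℝ => t ^ (-(n : ℝ) / 2) * (volume {x | f x < t}).toReal)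
      (𝓝[>] 0)
      (𝓝 (Real.sqrt 2 ^ n *
        (volume (Metric.ball (0 : EuclideanSpace ℝ (Fin n)) 1)).toReal /
        Real.sqrt (hessianMatrix f 0).det)) :=
  area_section_limit_general n f hf hconv hf0 hgrad hhess
end

section
/- Let n ≥ 1 and let f : ℝⁿ → ℝ be a smooth convex function with f(0) = 0, ∇f(0) = 0, and positive definite Hessian D²f(0). Then lim_{t → 0⁺} t^{-n/2} · ∫_{{x : f(x) < t}} (√(1 + ‖∇f(x)‖²) − 1) dx = 0. -/
open MeasureTheory Filter
open scoped RealInnerProductSpace Topology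

/-! The gradient vanishes at the minimum and the Hessian there is positive definite, so near `0`
the function is bounded below by `a ‖x‖²` and its gradient above by `L ‖x‖`. By convexity the
sublevel set `{f < t}` then lies in the ball of radius `√(t / a)`, whose volume is `O(t^{n/2})`,
while the integrand `√(1 + ‖∇f‖²) - 1 ≤ ‖∇f‖² / 2` is `O(t)` there. Hence
`t^{-n/2} N(t) = O(t)`. -/

open Metric Set Module

theorem Real.abs_sqrt_one_add_sq_sub_one_le (u : ℝ) : |√(1 + u ^ 2) - 1| ≤ u ^ 2 / 2 := by
  have h1 : 1 ≤ √(1 + u ^ 2) := Real.one_le_sqrt.2 (by nlinarith)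
  have h2 : √(1 + u ^ 2) ≤ 1 + u ^ 2 / 2 := Real.sqrt_le_iff.2 ⟨by positivity, by nlinarith⟩
  rw [abs_of_nonneg (by linarith)]
  linarith

theorem Real.rpow_neg_half_mul_sqrt_pow {t : ℝ} (ht : 0 < t) (n : ℕ) :
    t ^ (-(n : ℝ) / 2) * √t ^ n = 1 := by
  rw [Real.sqrt_eq_rpow, ← Real.rpow_natCast, ← Real.rpow_mul ht.le, ← Real.rpow_add ht,
    show -(n : ℝ) / 2 + 1 / 2 * n = 0 by ring, Real.rpow_zero]

theorem norm_gradient_eq_norm_fderiv {F : Type*} [NormedAddCommGroup F] [InnerProductSpace ℝ F]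
    [CompleteSpace F] (f : F → ℝ) (x : F) : ‖gradient f x‖ = ‖fderiv ℝ f x‖ :=
  LinearIsometryEquiv.norm_map _ _

section NormedSpace

variable {E : Type*} [NormedAddCommGroup E] [NormedSpace ℝ E]

theorem ContinuousLinearMap.exists_pos_mul_sq_norm_le [FiniteDimensional ℝ E]
    (B : E →L[ℝ] E →L[ℝ] ℝ) (hB : ∀ v ≠ 0, 0 < B v v) :
    ∃ c > 0, ∀ v, c * ‖v‖ ^ 2 ≤ B v v := by
  obtain ⟨c, hc, hsphere⟩ := (isCompact_sphere (0 : E) 1).exists_forall_le'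
    (B.continuous₂.comp (continuous_id.prodMk continuous_id)).continuousOn
    fun v hv => hB v (ne_zero_of_mem_unit_sphere ⟨v, hv⟩)
  refine ⟨c, hc, fun v => ?_⟩
  rcases eq_or_ne v 0 with rfl | hv
  · simp
  have hv' : 0 < ‖v‖ := norm_pos_iff.2 hv
  have hc_le : c ≤ ‖v‖⁻¹ * (‖v‖⁻¹ * B v v) := by
    simpa using hsphere (‖v‖⁻¹ • v) (by simp [norm_smul, hv'.ne'])
  calc c * ‖v‖ ^ 2 ≤ ‖v‖⁻¹ * (‖v‖⁻¹ * B v v) * ‖v‖ ^ 2 := by gcongr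
    _ = B v v := by field_simp

variable {f : E → ℝ}

theorem ConvexOn.sublevel_subset_ball {r t : ℝ} (hconv : ConvexOn ℝ univ f) (hr : 0 < r)
    (h0 : f 0 ≤ t) (hsphere : ∀ x ∈ sphere (0 : E) r, t ≤ f x) :
    {x | f x < t} ⊆ ball 0 r := by
  intro x hx
  by_contra hxr
  have hx_norm : r ≤ ‖x‖ := by simpa using hxr
  set θ := r / ‖x‖
  have hθ0 : 0 < θ := div_pos hr (hr.trans_le hx_norm)
  have hθ1 : θ ≤ 1 := div_le_one_of_le₀ hx_norm (norm_nonneg x)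
  have hθx : θ • x ∈ sphere (0 : E) r := by
    simp [θ, norm_smul, abs_of_pos hr, (hr.trans_le hx_norm).ne']
  have hseg : f (θ • x) ≤ θ * f x + (1 - θ) * f 0 := by
    simpa using hconv.2 (mem_univ x) (mem_univ 0) hθ0.le (sub_nonneg.2 hθ1) (by ring)
  have h1 : θ * f x < θ * t := mul_lt_mul_of_pos_left hx hθ0
  have h2 : (1 - θ) * f 0 ≤ (1 - θ) * t := mul_le_mul_of_nonneg_left h0 (sub_nonneg.2 hθ1)
  linarith [hsphere _ hθx]

theorem mul_sq_norm_le_of_norm_fderiv_sub_le (hf : Differentiable ℝ f) (hf0 : f 0 = 0)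
    {c r : ℝ} (B : E →L[ℝ] E →L[ℝ] ℝ) (hcoer : ∀ v, c * ‖v‖ ^ 2 ≤ B v v)
    (happrox : ∀ y ∈ ball (0 : E) r, ‖fderiv ℝ f y - B y‖ ≤ c / 2 * ‖y‖)
    {x : E} (hx : x ∈ ball 0 r) : c / 4 * ‖x‖ ^ 2 ≤ f x := by
  set g : ℝ → ℝ := fun s => f (s • x) - c / 4 * s ^ 2 * ‖x‖ ^ 2
  have hg : ∀ s, HasDerivAt g (fderiv ℝ f (s • x) x - c / 2 * s * ‖x‖ ^ 2) s := by
    intro s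
    have hray : HasDerivAt (fun s : ℝ => f (s • x)) (fderiv ℝ f (s • x) x) s :=
      (hf _).hasFDerivAt.comp_hasDerivAt s ((hasDerivAt_id s).smul_const x |>.congr_deriv
        (one_smul ℝ x))
    exact (hray.sub (((hasDerivAt_pow 2 s).const_mul (c / 4)).mul_const (‖x‖ ^ 2))).congr_deriv
      (by push_cast; ring)
  have hg' : ∀ s ∈ Ioo (0 : ℝ) 1, 0 ≤ fderiv ℝ f (s • x) x - c / 2 * s * ‖x‖ ^ 2 := by
    intro s ⟨hs0, hs1⟩
    have hsx : ‖s • x‖ = s * ‖x‖ := by rw [norm_smul, Real.norm_of_nonneg hs0.le]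
    have hmem : s • x ∈ ball (0 : E) r := by
      rw [mem_ball_zero_iff] at hx ⊢
      rw [hsx]
      nlinarith [norm_nonneg x]
    have herr : |(fderiv ℝ f (s • x) - B (s • x)) x| ≤ c / 2 * (s * ‖x‖) * ‖x‖ := by
      rw [← Real.norm_eq_abs, ← hsx]
      exact ((fderiv ℝ f (s • x) - B (s • x)).le_opNorm x).trans
        (mul_le_mul_of_nonneg_right (happrox _ hmem) (norm_nonneg x))
    have hsplit : fderiv ℝ f (s • x) x = s * B x x + (fderiv ℝ f (s • x) - B (s • x)) x := by
      simp
    nlinarith [abs_le.1 herr, hcoer x]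
  have hmono : MonotoneOn g (Icc 0 1) :=
    monotoneOn_of_hasDerivWithinAt_nonneg (convex_Icc 0 1)
      (fun s _ => (hg s).continuousAt.continuousWithinAt)
      (fun s _ => (hg s).hasDerivWithinAt) (by simpa using hg')
  have := hmono (left_mem_Icc.2 zero_le_one) (right_mem_Icc.2 zero_le_one) zero_le_one
  simpa [g, hf0] using this

theorem exists_ball_quadratic_bounds (hf : Differentiable ℝ f) (hf0 : f 0 = 0)
    (hdf0 : fderiv ℝ f 0 = 0) (hd2 : DifferentiableAt ℝ (fderiv ℝ f) 0) {c : ℝ} (hc : 0 < c)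
    (hcoer : ∀ v, c * ‖v‖ ^ 2 ≤ fderiv ℝ (fderiv ℝ f) 0 v v) :
    ∃ r > 0, ∃ L, ∀ x ∈ ball (0 : E) r, c / 4 * ‖x‖ ^ 2 ≤ f x ∧ ‖fderiv ℝ f x‖ ≤ L * ‖x‖ := by
  set B := fderiv ℝ (fderiv ℝ f) 0
  obtain ⟨r, hr, happrox⟩ : ∃ r > 0, ∀ y ∈ ball (0 : E) r, ‖fderiv ℝ f y - B y‖ ≤ c / 2 * ‖y‖ := by
    have := hd2.hasFDerivAt.isLittleO.def (half_pos hc)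
    simpa [hdf0] using Metric.eventually_nhds_iff_ball.1 this
  refine ⟨r, hr, ‖B‖ + c / 2, fun x hx =>
    ⟨mul_sq_norm_le_of_norm_fderiv_sub_le hf hf0 B hcoer happrox hx, ?_⟩⟩
  calc ‖fderiv ℝ f x‖ ≤ ‖B x‖ + ‖fderiv ℝ f x - B x‖ := norm_le_insert' _ _
    _ ≤ ‖B‖ * ‖x‖ + c / 2 * ‖x‖ := add_le_add (B.le_opNorm x) (happrox x hx)
    _ = (‖B‖ + c / 2) * ‖x‖ := by ring

theorem norm_setIntegral_sublevel_le [FiniteDimensional ℝ E] [MeasurableSpace E] [BorelSpace E]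
    (μ : Measure E) [μ.IsAddHaarMeasure] {φ : E → ℝ} {a r K t : ℝ}
    (hconv : ConvexOn ℝ univ f) (hf0 : f 0 = 0) (ha : 0 < a) (hr : 0 < r) (hK : 0 ≤ K)
    (hlow : ∀ x ∈ closedBall (0 : E) r, a * ‖x‖ ^ 2 ≤ f x)
    (hφ : ∀ x ∈ closedBall (0 : E) r, ‖φ x‖ ≤ K * ‖x‖ ^ 2) (ht : t ∈ Ioc 0 (a * r ^ 2)) :
    ‖∫ x in {x | f x < t}, φ x ∂μ‖ ≤
      K * (t / a) * (√(t / a) ^ finrank ℝ E * μ.real (ball 0 1)) := by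
  have hsub : {x | f x < t} ⊆ ball 0 r := hconv.sublevel_subset_ball hr (hf0 ▸ ht.1.le)
    fun x hx => by
      have := hlow x (sphere_subset_closedBall hx)
      rw [mem_sphere_zero_iff_norm.1 hx] at this
      linarith [ht.2]
  have hsq : ∀ x ∈ {x | f x < t}, ‖x‖ ^ 2 < t / a := fun x hx => by
    rw [lt_div_iff₀ ha]
    linarith [hlow x (ball_subset_closedBall (hsub hx)), hx.out]
  have hsubR : {x | f x < t} ⊆ ball 0 √(t / a) := fun x hx => by
    simpa using (Real.lt_sqrt (norm_nonneg x)).2 (hsq x hx)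
  have hbound : ∀ x ∈ {x | f x < t}, ‖φ x‖ ≤ K * (t / a) := fun x hx =>
    (hφ x (ball_subset_closedBall (hsub hx))).trans
      (mul_le_mul_of_nonneg_left (hsq x hx).le hK)
  have hR : 0 < √(t / a) := Real.sqrt_pos.2 (div_pos ht.1 ha)
  calc ‖∫ x in {x | f x < t}, φ x ∂μ‖ ≤ K * (t / a) * μ.real {x | f x < t} :=
        norm_setIntegral_le_of_norm_le_const ((measure_mono hsubR).trans_lt measure_ball_lt_top)
          hbound
    _ ≤ K * (t / a) * μ.real (ball 0 √(t / a)) :=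
        mul_le_mul_of_nonneg_left (measureReal_mono hsubR measure_ball_lt_top.ne)
          (mul_nonneg hK (div_nonneg ht.1.le ha.le))
    _ = K * (t / a) * (√(t / a) ^ finrank ℝ E * μ.real (ball 0 1)) := by
        rw [Measure.real, Measure.real, Measure.addHaar_ball_of_pos μ _ hR, ENNReal.toReal_mul,
          ENNReal.toReal_ofReal (by positivity)]


theorem tendsto_rpow_neg_mul_setIntegral_sublevel [FiniteDimensional ℝ E] [MeasurableSpace E]
    [BorelSpace E] (μ : Measure E) [μ.IsAddHaarMeasure] {φ : E → ℝ} {a r K : ℝ}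
    (hconv : ConvexOn ℝ univ f) (hf0 : f 0 = 0) (ha : 0 < a) (hr : 0 < r) (hK : 0 ≤ K)
    (hlow : ∀ x ∈ closedBall (0 : E) r, a * ‖x‖ ^ 2 ≤ f x)
    (hφ : ∀ x ∈ closedBall (0 : E) r, ‖φ x‖ ≤ K * ‖x‖ ^ 2) :
    Tendsto (fun t : ℝ => t ^ (-(finrank ℝ E : ℝ) / 2) * ∫ x in {x | f x < t}, φ x ∂μ)
      (𝓝[>] 0) (𝓝 0) := by
  set d := finrank ℝ E
  set C := K / a * μ.real (ball 0 1) / √a ^ d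
  have hdecay : ∀ t ∈ Ioc 0 (a * r ^ 2),
      ‖t ^ (-(d : ℝ) / 2) * ∫ x in {x | f x < t}, φ x ∂μ‖ ≤ C * t := by
    intro t ht
    have hbound := norm_setIntegral_sublevel_le μ hconv hf0 ha hr hK hlow hφ ht
    rw [Real.sqrt_div ht.1.le] at hbound
    rw [norm_mul, Real.norm_of_nonneg (Real.rpow_nonneg ht.1.le _)]
    calc _ ≤ t ^ (-(d : ℝ) / 2) * (K * (t / a) * ((√t / √a) ^ d * μ.real (ball 0 1))) :=
          mul_le_mul_of_nonneg_left hbound (Real.rpow_nonneg ht.1.le _)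
      _ = C * t := by
        linear_combination C * t * Real.rpow_neg_half_mul_sqrt_pow ht.1 d
  refine squeeze_zero_norm' (eventually_of_mem (Ioc_mem_nhdsGT (by positivity)) hdecay) ?_
  simpa using ((continuous_const_mul C).tendsto (0 : ℝ)).mono_left nhdsWithin_le_nhds

end NormedSpace

theorem hessianMatrix_eq_toMatrix {n : ℕ} (f : EuclideanSpace ℝ (Fin n) → ℝ)
    (x : EuclideanSpace ℝ (Fin n)) :
    hessianMatrix f x = LinearMap.BilinForm.toMatrix (EuclideanSpace.basisFun (Fin n) ℝ).toBasis
      (fderiv ℝ (fderiv ℝ f) x).toLinearMap₁₂ := by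
  ext i j
  rw [LinearMap.BilinForm.toMatrix_apply]
  simp [hessianMatrix, iteratedFDeriv_two_apply]

theorem fderiv_fderiv_apply_self_pos {n : ℕ} {f : EuclideanSpace ℝ (Fin n) → ℝ}
    {x : EuclideanSpace ℝ (Fin n)} (hhess : (hessianMatrix f x).PosDef)
    {v : EuclideanSpace ℝ (Fin n)} (hv : v ≠ 0) : 0 < fderiv ℝ (fderiv ℝ f) x v v := by
  set b := (EuclideanSpace.basisFun (Fin n) ℝ).toBasis
  rw [hessianMatrix_eq_toMatrix] at hhess
  have := hhess.dotProduct_mulVec_pos (x := b.repr v) (by simpa using hv)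
  rwa [star_trivial, ← LinearMap.BilinForm.apply_eq_dotProduct_toMatrix_mulVec] at this

theorem surface_minus_area_limit_zero_general (n : ℕ)
    (f : EuclideanSpace ℝ (Fin n) → ℝ)
    (hf : ContDiff ℝ (⊤ : ℕ∞) f) (hconv : ConvexOn ℝ Set.univ f)
    (hf0 : f 0 = 0) (hgrad : gradient f 0 = 0)
    (hhess : (hessianMatrix f 0).PosDef) :
    Tendsto (fun t : ℝ => t ^ (-(n : ℝ) / 2) *
        ∫ x in {x | f x < t}, (Real.sqrt (1 + ‖gradient f x‖ ^ 2) - 1))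
      (𝓝[>] 0) (𝓝 0) := by
  have hdf0 : fderiv ℝ f 0 = 0 := by simpa [gradient] using hgrad
  obtain ⟨c, hc, hcoer⟩ := (fderiv ℝ (fderiv ℝ f) 0).exists_pos_mul_sq_norm_le
    fun v hv => fderiv_fderiv_apply_self_pos hhess hv
  obtain ⟨r, hr, L, hbounds⟩ := exists_ball_quadratic_bounds (hf.differentiable (by simp)) hf0
    hdf0 ((hf.fderiv_right (m := 1) (by norm_cast)).differentiable (by simp) 0) hc hcoer
  have hball : closedBall (0 : EuclideanSpace ℝ (Fin n)) (r / 2) ⊆ ball 0 r :=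
    closedBall_subset_ball (half_lt_self hr)
  have hφ : ∀ x ∈ closedBall 0 (r / 2), ‖√(1 + ‖gradient f x‖ ^ 2) - 1‖ ≤ L ^ 2 / 2 * ‖x‖ ^ 2 :=
    fun x hx => by
      have hgrad_le := (hbounds x (hball hx)).2
      rw [← norm_gradient_eq_norm_fderiv] at hgrad_le
      calc ‖√(1 + ‖gradient f x‖ ^ 2) - 1‖ ≤ ‖gradient f x‖ ^ 2 / 2 :=
            Real.abs_sqrt_one_add_sq_sub_one_le _
        _ ≤ (L * ‖x‖) ^ 2 / 2 := by gcongr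
        _ = L ^ 2 / 2 * ‖x‖ ^ 2 := by ring
  have hlim := tendsto_rpow_neg_mul_setIntegral_sublevel volume hconv hf0
    (by positivity : 0 < c / 4) (half_pos hr) (by positivity) (fun x hx => (hbounds x (hball hx)).1) hφ
  rwa [finrank_euclideanSpace_fin] at hlim

theorem surface_minus_area_limit_zero (n : ℕ) (hn : 1 ≤ n)
    (f : EuclideanSpace ℝ (Fin n) → ℝ)
    (hf : ContDiff ℝ (⊤ : ℕ∞) f) (hconv : ConvexOn ℝ Set.univ f)
    (hf0 : f 0 = 0) (hgrad : gradient f 0 = 0)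
    (hhess : (hessianMatrix f 0).PosDef) :
    Tendsto (fun t : ℝ => t ^ (-(n : ℝ) / 2) *
        ∫ x in {x | f x < t}, (Real.sqrt (1 + ‖gradient f x‖ ^ 2) - 1))
      (𝓝[>] 0) (𝓝 0) :=
  surface_minus_area_limit_zero_general n f hf hconv hf0 hgrad hhess
end

section
/- Let n ≥ 1, let a₁, …, a_n > 0, and let f : ℝⁿ → ℝ be given by f(x) = Σ_{i=1}^n a_i² x_i². Then for every x ∈ ℝⁿ and every k > 0, V*_x(k) = α_n · k^{(n+2)/2}, where α_n = 2 σ_{n−1} / (n (n+2) a₁ a₂ ⋯ a_n) and σ_{n−1} is the surface area of the unit (n−1)-sphere in ℝⁿ. -/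
open MeasureTheory Filter
open scoped RealInnerProductSpace Topology

/-!
Since `f = ‖T ·‖²` with `T = diag(a)`, the graph of `f` lies above its tangent plane at `x` by
exactly `‖T (y - x)‖²`, so after translating by `x` the volume is `∫ (k - ‖T z‖²)⁺ dz`. The
substitution `w = T z` contributes `|det T|⁻¹ = (a₁ ⋯ aₙ)⁻¹`, and polar coordinates turn
`∫ (k - ‖w‖²)⁺ dw` into `n ωₙ ∫₀^√k rⁿ⁻¹ (k - r²) dr = n ωₙ · 2 k^((n+2)/2) / (n (n+2))`.
-/

open Set Metric Module

theorem integral_Ioi_pow_mul_max_sub_sq (m : ℕ) {k : ℝ} (hk : 0 ≤ k) :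
    ∫ r in Ioi (0 : ℝ), r ^ m * max (k - r ^ 2) 0 =
      2 / ((m + 1) * (m + 3)) * k ^ (((m : ℝ) + 3) / 2) := by
  set s := √k with hs_def
  have hs : 0 ≤ s := Real.sqrt_nonneg k
  have hsk : s ^ 2 = k := Real.sq_sqrt hk
  have hvanish : ∀ r ∈ Ioi (0 : ℝ) \ Ioc 0 s, r ^ m * max (k - r ^ 2) 0 = 0 := by
    rintro r ⟨hr, hrs⟩
    have : s < r := not_le.1 fun h => hrs ⟨hr, h⟩
    rw [max_eq_right (by nlinarith), mul_zero]
  have hpoly : EqOn (fun r => r ^ m * max (k - r ^ 2) 0) (fun r => k * r ^ m - r ^ (m + 2))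
      (uIcc 0 s) := by
    intro r hr
    rw [uIcc_of_le hs] at hr
    dsimp only
    rw [max_eq_left (by nlinarith [hr.1, hr.2])]
    ring
  have hpow : s ^ (m + 3) = k ^ (((m : ℝ) + 3) / 2) := by
    rw [hs_def, Real.sqrt_eq_rpow, ← Real.rpow_natCast, ← Real.rpow_mul hk]
    push_cast
    ring_nf
  rw [setIntegral_eq_of_subset_of_forall_sdiff_eq_zero measurableSet_Ioi Ioc_subset_Ioi_self
      hvanish, ← intervalIntegral.integral_of_le hs, intervalIntegral.integral_congr hpoly,
    intervalIntegral.integral_sub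
      ((intervalIntegral.intervalIntegrable_pow m).const_mul k)
      (intervalIntegral.intervalIntegrable_pow _),
    intervalIntegral.integral_const_mul, integral_pow, integral_pow, ← hpow, ← hsk]
  push_cast
  field_simp
  ring

theorem integral_max_sub_norm_sq_addHaar {E : Type*} [NormedAddCommGroup E] [NormedSpace ℝ E]
    [FiniteDimensional ℝ E] [Nontrivial E] [MeasurableSpace E] [BorelSpace E]
    (μ : Measure E) [μ.IsAddHaarMeasure] {k : ℝ} (hk : 0 ≤ k) :
    ∫ w, max (k - ‖w‖ ^ 2) 0 ∂μ =
      2 * μ.real (ball 0 1) / (finrank ℝ E + 2) * k ^ (((finrank ℝ E : ℝ) + 2) / 2) := by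
  obtain ⟨m, hm⟩ : ∃ m, finrank ℝ E = m + 1 := Nat.exists_eq_add_one.2 finrank_pos
  rw [integral_fun_norm_addHaar μ fun r => max (k - r ^ 2) 0, hm, Nat.add_sub_cancel]
  simp only [smul_eq_mul, nsmul_eq_mul]
  rw [integral_Ioi_pow_mul_max_sub_sq m hk]
  push_cast
  rw [show (m : ℝ) + 1 + 2 = m + 3 by ring]
  field_simp

theorem integral_comp_linearMap_addHaar {E F : Type*} [NormedAddCommGroup E] [NormedSpace ℝ E]
    [FiniteDimensional ℝ E] [MeasurableSpace E] [BorelSpace E] [NormedAddCommGroup F]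
    [NormedSpace ℝ F] (μ : Measure E) [μ.IsAddHaarMeasure] {T : E →ₗ[ℝ] E}
    (hT : LinearMap.det T ≠ 0) (g : E → F) :
    ∫ z, g (T z) ∂μ = |LinearMap.det T|⁻¹ • ∫ w, g w ∂μ := by
  have hemb : MeasurableEmbedding T :=
    (T.equivOfDetNeZero hT).toContinuousLinearEquiv.toHomeomorph.measurableEmbedding
  rw [← hemb.integral_map, Measure.map_linearMap_addHaar_eq_smul_addHaar μ hT,
    integral_smul_measure, ENNReal.toReal_ofReal (abs_nonneg _), abs_inv]

theorem setIntegral_setOf_pos_eq_integral_max {α : Type*} [MeasurableSpace α] (μ : Measure α)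
    {h : α → ℝ} (hh : Measurable h) :
    ∫ y in {y | 0 < h y}, h y ∂μ = ∫ y, max (h y) 0 ∂μ := by
  rw [← setIntegral_eq_integral_of_forall_compl_eq_zero (s := {y | 0 < h y})
    fun y hy => max_eq_right (not_lt.1 hy)]
  exact setIntegral_congr_fun (measurableSet_lt measurable_const hh)
    fun y hy => (max_eq_left (le_of_lt hy)).symm

theorem inner_gradient_norm_sq_comp {E F : Type*} [NormedAddCommGroup E] [InnerProductSpace ℝ E]
    [CompleteSpace E] [NormedAddCommGroup F] [InnerProductSpace ℝ F] (T : E →L[ℝ] F)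
    (x v : E) : ⟪gradient (fun y => ‖T y‖ ^ 2) x, v⟫ = 2 * ⟪T x, T v⟫ := by
  rw [gradient, InnerProductSpace.toDual_symm_apply, T.hasFDerivAt.norm_sq.fderiv]
  simp

theorem norm_sq_comp_eq_add_inner_gradient_add {E F : Type*} [NormedAddCommGroup E]
    [InnerProductSpace ℝ E] [CompleteSpace E] [NormedAddCommGroup F] [InnerProductSpace ℝ F]
    (T : E →L[ℝ] F) (x y : E) :
    ‖T y‖ ^ 2 = ‖T x‖ ^ 2 + ⟪gradient (fun y => ‖T y‖ ^ 2) x, y - x⟫ + ‖T (y - x)‖ ^ 2 := by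
  rw [inner_gradient_norm_sq_comp, ← norm_add_sq_real, ← map_add, add_sub_cancel]

/-- The paper's `V*_x(k)`. -/
noncomputable def tangentCapVolume {E : Type*} [NormedAddCommGroup E] [InnerProductSpace ℝ E]
    [CompleteSpace E] [MeasurableSpace E] (μ : Measure E) (f : E → ℝ) (x : E) (k : ℝ) : ℝ :=
  ∫ y in {y | f y < f x + ⟪gradient f x, y - x⟫ + k}, (f x + ⟪gradient f x, y - x⟫ + k - f y) ∂μ

theorem tangentCapVolume_norm_sq_comp {E : Type*} [NormedAddCommGroup E]
    [InnerProductSpace ℝ E] [FiniteDimensional ℝ E] [Nontrivial E] [MeasurableSpace E]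
    [BorelSpace E] (μ : Measure E) [μ.IsAddHaarMeasure] {T : E →L[ℝ] E}
    (hT : LinearMap.det (T : E →ₗ[ℝ] E) ≠ 0) (x : E) {k : ℝ} (hk : 0 ≤ k) :
    tangentCapVolume μ (fun y => ‖T y‖ ^ 2) x k =
      2 * μ.real (ball 0 1) / ((finrank ℝ E + 2) * |LinearMap.det (T : E →ₗ[ℝ] E)|) *
        k ^ (((finrank ℝ E : ℝ) + 2) / 2) := by
  have hcap : ∀ y, ‖T x‖ ^ 2 + ⟪gradient (fun y => ‖T y‖ ^ 2) x, y - x⟫ + k - ‖T y‖ ^ 2 =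
      k - ‖T (y - x)‖ ^ 2 := fun y => by
    rw [norm_sq_comp_eq_add_inner_gradient_add T x y]
    ring
  simp_rw [tangentCapVolume, ← sub_pos (b := ‖T _‖ ^ 2), hcap]
  rw [setIntegral_setOf_pos_eq_integral_max μ (by fun_prop),
    integral_sub_right_eq_self (fun z => max (k - ‖T z‖ ^ 2) 0) x, ← ContinuousLinearMap.coe_coe,
    integral_comp_linearMap_addHaar μ hT (fun w => max (k - ‖w‖ ^ 2) 0),
    integral_max_sub_norm_sq_addHaar μ hk, smul_eq_mul, ← div_div]
  ring

theorem paraboloid_volume_formula (n : ℕ) (hn : 1 ≤ n) (a : Fin n → ℝ)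
    (ha : ∀ i, 0 < a i) (f : EuclideanSpace ℝ (Fin n) → ℝ)
    (hf : ∀ x, f x = ∑ i, (a i) ^ 2 * (x i) ^ 2)
    (x : EuclideanSpace ℝ (Fin n)) (k : ℝ) (hk : 0 < k) :
    (∫ y in {y | f y < f x + ⟪gradient f x, y - x⟫ + k},
        (f x + ⟪gradient f x, y - x⟫ + k - f y)) =
      2 * ((n : ℝ) * (volume (Metric.ball (0 : EuclideanSpace ℝ (Fin n)) 1)).toReal) /
          ((n : ℝ) * ((n : ℝ) + 2) * ∏ i, a i) *
        k ^ (((n : ℝ) + 2) / 2) := by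
  set T := Matrix.toEuclideanCLM (n := Fin n) (𝕜 := ℝ) (Matrix.diagonal a)
  have hdet : LinearMap.det (T : EuclideanSpace ℝ (Fin n) →ₗ[ℝ] _) = ∏ i, a i := by
    rw [Matrix.coe_toEuclideanCLM_eq_toEuclideanLin, Matrix.toEuclideanLin_eq_toLin_orthonormal,
      LinearMap.det_toLin, Matrix.det_diagonal]
  have hprod : 0 < ∏ i, a i := Finset.prod_pos fun i _ => ha i
  have hfT : ∀ y, f y = ‖T y‖ ^ 2 := fun y => by
    simp only [hf, EuclideanSpace.real_norm_sq_eq, Matrix.ofLp_toEuclideanCLM,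
      Matrix.mulVec_diagonal, mul_pow, T]
  have : NeZero n := ⟨by omega⟩
  obtain rfl : f = fun y => ‖T y‖ ^ 2 := funext hfT
  have hV := tangentCapVolume_norm_sq_comp volume (hdet ▸ hprod.ne') x hk.le
  rw [tangentCapVolume, hdet, abs_of_pos hprod, finrank_euclideanSpace_fin, measureReal_def] at hV
  rw [hV]
  field_simp
end

section
/- Let n ≥ 1, let g : (0,∞) → ℝ, and let f : ℝⁿ → ℝ be a continuous positive function satisfying ∫_{B(q,r)} f(y) dy = f(q) · g(r) for all q ∈ ℝⁿ and all r > 0. If f has a local maximum at some point q₀ ∈ ℝⁿ, then there exists r₀ > 0 such that g(r) ≤ ω_n · rⁿ for all 0 < r < r₀, where ω_n is the Lebesgue measure of the unit ball in ℝⁿ. -/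
/-! Near a local maximum `q₀` of `f`, the mean-value identity gives
`f q₀ * g r = ∫_{B(q₀,r)} f ≤ f q₀ * |B(q₀,r)| = f q₀ * ω_n * rⁿ` for small `r`,
and dividing by `f q₀ > 0` yields the bound on `g`. -/

open MeasureTheory Metric Module

theorem setIntegral_ball_le_of_isLocalMax {X : Type*} [MetricSpace X] [ProperSpace X]
    [MeasurableSpace X] [OpensMeasurableSpace X] {μ : Measure X} [IsFiniteMeasureOnCompacts μ]
    {f : X → ℝ} {q : X} (hf : Continuous f) (hq : IsLocalMax f q) :
    ∃ r₀ > 0, ∀ r ≤ r₀, ∫ y in ball q r, f y ∂μ ≤ μ.real (ball q r) * f q := by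
  obtain ⟨r₀, hr₀, hle⟩ := Metric.mem_nhds_iff.mp hq
  refine ⟨r₀, hr₀, fun r hr => ?_⟩
  have hint : IntegrableOn f (ball q r) μ :=
    (hf.continuousOn.integrableOn_compact (isCompact_closedBall q r)).mono_set
      ball_subset_closedBall
  calc ∫ y in ball q r, f y ∂μ ≤ ∫ _ in ball q r, f q ∂μ :=
        setIntegral_mono_on hint (integrableOn_const measure_ball_lt_top.ne) measurableSet_ball
          fun y hy => hle (ball_subset_ball hr hy)
    _ = μ.real (ball q r) * f q := by rw [setIntegral_const, smul_eq_mul]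

theorem addHaar_real_ball_of_pos {E : Type*} [NormedAddCommGroup E] [NormedSpace ℝ E]
    [MeasurableSpace E] [BorelSpace E] [FiniteDimensional ℝ E] (μ : Measure E)
    [μ.IsAddHaarMeasure] (x : E) {r : ℝ} (hr : 0 < r) :
    μ.real (ball x r) = μ.real (ball 0 1) * r ^ finrank ℝ E := by
  rw [measureReal_def, Measure.addHaar_ball_of_pos μ x hr, ENNReal.toReal_mul,
    ENNReal.toReal_ofReal (by positivity), measureReal_def, mul_comm]

theorem mean_value_local_max_general (n : ℕ) (g : ℝ → ℝ)
    (f : EuclideanSpace ℝ (Fin n) → ℝ) (hf : Continuous f) (hpos : ∀ x, 0 < f x)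
    (hmean : ∀ (q : EuclideanSpace ℝ (Fin n)) (r : ℝ), 0 < r →
      (∫ y in Metric.ball q r, f y) = f q * g r)
    (q₀ : EuclideanSpace ℝ (Fin n)) (hq₀ : IsLocalMax f q₀) :
    ∃ r₀ > 0, ∀ r : ℝ, 0 < r → r < r₀ →
      g r ≤ (volume (Metric.ball (0 : EuclideanSpace ℝ (Fin n)) 1)).toReal * r ^ n := by
  obtain ⟨r₀, hr₀, hint⟩ := setIntegral_ball_le_of_isLocalMax (μ := volume) hf hq₀
  refine ⟨r₀, hr₀, fun r hr hrr₀ => ?_⟩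
  have hle :
      f q₀ * g r ≤ f q₀ * (volume.real (ball (0 : EuclideanSpace ℝ (Fin n)) 1) * r ^ n) := by
    simpa only [hmean q₀ r hr, addHaar_real_ball_of_pos volume q₀ hr,
      finrank_euclideanSpace_fin, mul_comm (f q₀)] using hint r hrr₀.le
  exact le_of_mul_le_mul_left hle (hpos q₀)

theorem mean_value_local_max (n : ℕ) (hn : 1 ≤ n) (g : ℝ → ℝ)
    (f : EuclideanSpace ℝ (Fin n) → ℝ) (hf : Continuous f) (hpos : ∀ x, 0 < f x)
    (hmean : ∀ (q : EuclideanSpace ℝ (Fin n)) (r : ℝ), 0 < r →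
      (∫ y in Metric.ball q r, f y) = f q * g r)
    (q₀ : EuclideanSpace ℝ (Fin n)) (hq₀ : IsLocalMax f q₀) :
    ∃ r₀ > 0, ∀ r : ℝ, 0 < r → r < r₀ →
      g r ≤ (volume (Metric.ball (0 : EuclideanSpace ℝ (Fin n)) 1)).toReal * r ^ n :=
  mean_value_local_max_general n g f hf hpos hmean q₀ hq₀
end

section
/- Let n ≥ 1, let g : (0,∞) → ℝ, and let f : ℝⁿ → ℝ be a smooth function satisfying ∫_{B(q,r)} f(y) dy = f(q) · g(r) for all q ∈ ℝⁿ and all r > 0. Then for each i = 1, …, n, the partial derivative ∂f/∂x_i also satisfies ∫_{B(q,r)} (∂f/∂x_i)(y) dy = (∂f/∂x_i)(q) · g(r) for all q ∈ ℝⁿ and all r > 0. -/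
/-!
By translation invariance, `∫_{B(x,r)} f = ∫_{B(0,r)} f(x + a) da`, and this may be differentiated
in `x` under the integral sign because `Df` is bounded on a compact neighbourhood of the points
involved; so its derivative at `q` is `∫_{B(q,r)} Df`. The mean value hypothesis says the same
function of `x` is `g(r) f(x)`, whose derivative is `g(r) Df(q)`. Evaluating both at `eᵢ` gives
the claim.
-/

open MeasureTheory Metric

theorem setIntegral_ball_eq_setIntegral_ball_zero_add {E F : Type*} [NormedAddCommGroup E]
    [MeasurableSpace E] [MeasurableAdd E] [NormedAddCommGroup F] [NormedSpace ℝ F]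
    (μ : Measure E) [μ.IsAddLeftInvariant] (h : E → F) (x : E) (r : ℝ) :
    ∫ y in ball x r, h y ∂μ = ∫ a in ball 0 r, h (x + a) ∂μ := by
  rw [← (measurePreserving_add_left μ x).setIntegral_preimage_emb
    (measurableEmbedding_addLeft x), preimage_add_left_ball, neg_add_cancel]

section

variable {E F : Type*} [NormedAddCommGroup E] [NormedSpace ℝ E] [ProperSpace E]
  [MeasurableSpace E] [BorelSpace E] [NormedAddCommGroup F] [NormedSpace ℝ F]
  (μ : Measure E) [IsFiniteMeasureOnCompacts μ]

theorem hasFDerivAt_setIntegral_add_of_isBounded {f : E → F} (hf : ContDiff ℝ 1 f) {s : Set E}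
    (hs : Bornology.IsBounded s) (x₀ : E) :
    HasFDerivAt (fun x ↦ ∫ a in s, f (x + a) ∂μ) (∫ a in s, fderiv ℝ f (x₀ + a) ∂μ) x₀ := by
  have hf' : Continuous (fderiv ℝ f) := hf.continuous_fderiv one_ne_zero
  obtain ⟨R, hsR⟩ := hs.subset_closedBall 0
  obtain ⟨C, hC⟩ : ∃ C, ∀ y ∈ closedBall x₀ (1 + R), ‖fderiv ℝ f y‖ ≤ C :=
    (isCompact_closedBall x₀ (1 + R)).exists_bound_of_continuousOn hf'.continuousOn
  have hint_s {h : E → F} (hh : Continuous h) : IntegrableOn h s μ :=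
    (hh.continuousOn.integrableOn_compact (isCompact_closedBall 0 R)).mono_set hsR
  have hs_ae : ∀ᵐ a ∂μ.restrict s, a ∈ closedBall 0 R :=
    ae_restrict_of_ae_restrict_of_subset hsR (ae_restrict_mem measurableSet_closedBall)
  refine hasFDerivAt_integral_of_dominated_of_fderiv_le (ball_mem_nhds x₀ one_pos)
    (bound := fun _ ↦ C) (F' := fun x a ↦ fderiv ℝ f (x + a))
    (.of_forall fun x ↦ (hf.continuous.comp (continuous_const_add x)).aestronglyMeasurable)
    (hint_s (hf.continuous.comp (continuous_const_add x₀)))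
    (hf'.comp (continuous_const_add x₀)).aestronglyMeasurable ?_ ?_ ?_
  · filter_upwards [hs_ae] with a ha x hx
    refine hC _ ?_
    rw [mem_closedBall, dist_eq_norm, add_sub_right_comm]
    exact (norm_add_le _ _).trans
      (add_le_add (mem_ball_iff_norm.1 hx).le (mem_closedBall_zero_iff.1 ha))
  · exact integrableOn_const ((measure_mono hsR).trans_lt measure_closedBall_lt_top).ne
  · exact .of_forall fun a x _ ↦
      (hasFDerivAt_comp_add_right a).2 (hf.differentiable one_ne_zero (x + a)).hasFDerivAt

variable [μ.IsAddLeftInvariant] {f : E → F}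

theorem hasFDerivAt_setIntegral_ball (hf : ContDiff ℝ 1 f) (r : ℝ) (x₀ : E) :
    HasFDerivAt (fun x ↦ ∫ y in ball x r, f y ∂μ) (∫ y in ball x₀ r, fderiv ℝ f y ∂μ) x₀ := by
  rw [setIntegral_ball_eq_setIntegral_ball_zero_add μ (fderiv ℝ f)]
  exact (hasFDerivAt_setIntegral_add_of_isBounded μ hf isBounded_ball x₀).congr_of_eventuallyEq
    (.of_forall fun x ↦ setIntegral_ball_eq_setIntegral_ball_zero_add μ f x r)

theorem setIntegral_ball_fderiv_apply_eq_smul (hf : ContDiff ℝ 1 f) {r c : ℝ}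
    (hmean : ∀ x, ∫ y in ball x r, f y ∂μ = c • f x) (x₀ v : E) :
    ∫ y in ball x₀ r, fderiv ℝ f y v ∂μ = c • fderiv ℝ f x₀ v := by
  have hderiv : HasFDerivAt (fun x ↦ ∫ y in ball x r, f y ∂μ) (c • fderiv ℝ f x₀) x₀ := by
    rw [funext hmean]
    exact (hf.differentiable one_ne_zero x₀).hasFDerivAt.const_smul c
  have hint : IntegrableOn (fderiv ℝ f) (ball x₀ r) μ :=
    ((hf.continuous_fderiv one_ne_zero).continuousOn.integrableOn_compact
      (isCompact_closedBall x₀ r)).mono_set ball_subset_closedBall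
  rw [← ContinuousLinearMap.integral_apply hint,
    (hasFDerivAt_setIntegral_ball μ hf r x₀).unique hderiv]
  rfl

end

theorem mean_value_partial_deriv_general (n : ℕ) (g : ℝ → ℝ)
    (f : EuclideanSpace ℝ (Fin n) → ℝ) (hf : ContDiff ℝ (⊤ : ℕ∞) f)
    (hmean : ∀ (q : EuclideanSpace ℝ (Fin n)) (r : ℝ), 0 < r →
      (∫ y in Metric.ball q r, f y) = f q * g r) :
    ∀ (i : Fin n) (q : EuclideanSpace ℝ (Fin n)) (r : ℝ), 0 < r →
      (∫ y in Metric.ball q r, fderiv ℝ f y (EuclideanSpace.single i 1)) =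
        fderiv ℝ f q (EuclideanSpace.single i 1) * g r := by
  intro i q r hr
  rw [mul_comm, ← smul_eq_mul]
  refine setIntegral_ball_fderiv_apply_eq_smul volume (hf.of_le (by simp)) (fun x ↦ ?_) q _
  rw [hmean x r hr, smul_eq_mul, mul_comm]

theorem mean_value_partial_deriv (n : ℕ) (hn : 1 ≤ n) (g : ℝ → ℝ)
    (f : EuclideanSpace ℝ (Fin n) → ℝ) (hf : ContDiff ℝ (⊤ : ℕ∞) f)
    (hmean : ∀ (q : EuclideanSpace ℝ (Fin n)) (r : ℝ), 0 < r →
      (∫ y in Metric.ball q r, f y) = f q * g r) :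
    ∀ (i : Fin n) (q : EuclideanSpace ℝ (Fin n)) (r : ℝ), 0 < r →
      (∫ y in Metric.ball q r, fderiv ℝ f y (EuclideanSpace.single i 1)) =
        fderiv ℝ f q (EuclideanSpace.single i 1) * g r :=
  mean_value_partial_deriv_general n g f hf hmean
end

section
/- Let n ≥ 1 and let a₁, …, a_n > 0, and define V : ℝⁿ → ℝ by V(y) = √(1 + 4 Σ_{i=1}^n a_i² y_i²). Then there is NO function g : (0,∞) → ℝ such that ∫_{B(q,r)} V(y) dy = V(q) · g(r) for all q ∈ ℝⁿ and all r > 0, where B(q,r) is the open ball of radius r centered at q. -/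
/-!
Write `V y = √(1 + ‖L y‖²)` with `L = diag(2 aᵢ)` injective. Then `V` is `‖L‖`-Lipschitz, so
`∫_{B(q,1)} V ≤ (V q + ‖L‖) |B₁|`, i.e. `V q · g 1 ≤ (V q + ‖L‖) |B₁|` for every `q`; since `V` is
unbounded this forces `g 1 ≤ |B₁|`. On the other hand `V` has a strict minimum `V 0 = 1` at the
origin, so `g 1 = ∫_{B(0,1)} V > |B₁|`.
-/

open MeasureTheory Metric Set

section ProperSpace

variable {X : Type*} [PseudoMetricSpace X] [ProperSpace X] [MeasurableSpace X]
  [OpensMeasurableSpace X] (μ : Measure X) [IsFiniteMeasureOnCompacts μ]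

theorem Continuous.integrableOn_ball {f : X → ℝ} (hf : Continuous f) (q : X) (r : ℝ) :
    IntegrableOn f (ball q r) μ :=
  (hf.locallyIntegrable.integrableOn_isCompact (isCompact_closedBall q r)).mono_set
    ball_subset_closedBall

theorem LipschitzWith.setIntegral_ball_le {f : X → ℝ} {K : NNReal} (hf : LipschitzWith K f)
    (q : X) (r : ℝ) : ∫ y in ball q r, f y ∂μ ≤ (f q + K * r) * μ.real (ball q r) := by
  have hbound : ∀ y ∈ ball q r, f y ≤ f q + K * r := fun y hy => by
    have h := calc f y - f q ≤ dist (f y) (f q) := (Real.dist_eq _ _).symm ▸ le_abs_self _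
      _ ≤ K * dist y q := hf.dist_le_mul y q
      _ ≤ K * r := by gcongr; exact (mem_ball.1 hy).le
    linarith
  calc ∫ y in ball q r, f y ∂μ ≤ ∫ _ in ball q r, (f q + K * r) ∂μ :=
        setIntegral_mono_on (hf.continuous.integrableOn_ball μ q r)
          (integrableOn_const measure_ball_lt_top.ne) measurableSet_ball hbound
    _ = (f q + K * r) * μ.real (ball q r) := by rw [setIntegral_const, smul_eq_mul, mul_comm]

theorem mul_measureReal_ball_lt_setIntegral_ball [NullSingletonClass μ] [μ.IsOpenPosMeasure]
    {f : X → ℝ} (hf : Continuous f) {p : X} (hmin : ∀ y ≠ p, f p < f y) {r : ℝ}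
    (hr : 0 < r) :
    f p * μ.real (ball p r) < ∫ y in ball p r, f y ∂μ := by
  have hsupp : ball p r \ {p} ⊆ Function.support (fun y => f y - f p) ∩ ball p r :=
    fun y ⟨hy, hyp⟩ => ⟨sub_ne_zero.2 (hmin y hyp).ne', hy⟩
  have hpos : 0 < ∫ y in ball p r, (f y - f p) ∂μ := by
    refine (setIntegral_pos_iff_support_of_nonneg_ae
      (ae_of_all _ fun y => sub_nonneg.2 ?_)
      ((hf.integrableOn_ball μ p r).sub (integrableOn_const measure_ball_lt_top.ne))).2 ?_
    · rcases eq_or_ne y p with rfl | hy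
      · exact le_rfl
      · exact (hmin y hy).le
    · calc 0 < μ (ball p r \ {p}) := by
            rw [measure_sdiff_null (measure_singleton p)]; exact measure_ball_pos μ p hr
        _ ≤ _ := measure_mono hsupp
  rw [integral_sub (hf.integrableOn_ball μ p r) (integrableOn_const measure_ball_lt_top.ne),
    setIntegral_const, smul_eq_mul] at hpos
  linarith

end ProperSpace

section AddHaar

variable {E : Type*} [NormedAddCommGroup E] [ProperSpace E] [MeasurableSpace E] [BorelSpace E]
  (μ : Measure E) [μ.IsAddHaarMeasure]

theorem LipschitzWith.le_measureReal_ball_of_setIntegral_ball_eq_mul {f : E → ℝ} {K : NNReal}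
    (hf : LipschitzWith K f) (hunb : ¬BddAbove (range f)) {r c : ℝ}
    (hc : ∀ q, ∫ y in ball q r, f y ∂μ = f q * c) : c ≤ μ.real (ball 0 r) := by
  set B := μ.real (ball (0 : E) r) with hB
  by_contra! hlt
  refine hunb ⟨K * r * B / (c - B), forall_mem_range.2 fun q => ?_⟩
  have hq : f q * c ≤ (f q + K * r) * B := by
    rw [← hc q, hB, ← Measure.addHaar_real_ball_center μ q r]
    exact hf.setIntegral_ball_le μ q r
  rw [le_div_iff₀ (sub_pos.2 hlt)]
  linarith

theorem LipschitzWith.not_exists_setIntegral_ball_eq_mul [NullSingletonClass μ] {f : E → ℝ}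
    {K : NNReal} (hf : LipschitzWith K f) (hunb : ¬BddAbove (range f)) {p : E}
    (hmin : ∀ y ≠ p, f p < f y) (hp : 0 < f p) :
    ¬∃ g : ℝ → ℝ, ∀ q r, 0 < r → ∫ y in ball q r, f y ∂μ = f q * g r := by
  rintro ⟨g, hg⟩
  have hle := hf.le_measureReal_ball_of_setIntegral_ball_eq_mul μ hunb fun q => hg q 1 one_pos
  have hlt := mul_measureReal_ball_lt_setIntegral_ball μ hf.continuous hmin one_pos
  rw [hg p 1 one_pos, Measure.addHaar_real_ball_center] at hlt
  exact (lt_of_mul_lt_mul_left hlt hp.le).not_ge hle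

end AddHaar

section SqrtOneAddNormSq

variable {E F : Type*} [NormedAddCommGroup E] [NormedSpace ℝ E] [NormedAddCommGroup F]
  [NormedSpace ℝ F] (L : E →L[ℝ] F)

theorem Real.lipschitzWith_sqrt_one_add_sq :
    LipschitzWith 1 (fun x : ℝ => √(1 + x ^ 2)) := by
  refine LipschitzWith.of_dist_le_mul fun x y => ?_
  rw [NNReal.coe_one, one_mul, Real.dist_eq, Real.dist_eq, abs_le]
  -- `(√(1+x²) - √(1+y²)) (√(1+x²) + √(1+y²)) = (x - y) (x + y)` and `|x + y| < √(1+x²) + √(1+y²)`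
  have hsx := Real.sq_sqrt (by positivity : (0:ℝ) ≤ 1 + x ^ 2)
  have hsy := Real.sq_sqrt (by positivity : (0:ℝ) ≤ 1 + y ^ 2)
  have hx : |x| < √(1 + x ^ 2) := Real.lt_sqrt_of_sq_lt (by rw [sq_abs]; linarith)
  have hy : |y| < √(1 + y ^ 2) := Real.lt_sqrt_of_sq_lt (by rw [sq_abs]; linarith)
  constructor <;> cases abs_cases (x - y) <;> cases abs_cases x <;> cases abs_cases y <;> nlinarith

theorem ContinuousLinearMap.lipschitzWith_sqrt_one_add_norm_sq :
    LipschitzWith ‖L‖₊ (fun y => √(1 + ‖L y‖ ^ 2)) := by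
  simpa [Function.comp_def] using
    Real.lipschitzWith_sqrt_one_add_sq.comp (lipschitzWith_one_norm.comp L.lipschitz)

theorem ContinuousLinearMap.sqrt_one_add_norm_sq_lt (hL : Function.Injective L) {y : E}
    (hy : y ≠ 0) : √(1 + ‖L 0‖ ^ 2) < √(1 + ‖L y‖ ^ 2) := by
  have : 0 < ‖L y‖ := norm_pos_iff.2 ((map_ne_zero_iff L hL).2 hy)
  gcongr
  simpa

theorem ContinuousLinearMap.not_bddAbove_sqrt_one_add_norm_sq {y : E} (hy : L y ≠ 0) :
    ¬BddAbove (range fun y => √(1 + ‖L y‖ ^ 2)) := by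
  refine not_bddAbove_iff.2 fun M => ⟨_, ⟨(M / ‖L y‖) • y, rfl⟩, ?_⟩
  have hnorm : ‖L ((M / ‖L y‖) • y)‖ = |M| := by
    rw [map_smul, norm_smul, Real.norm_eq_abs, abs_div, abs_norm,
      div_mul_cancel₀ _ (norm_ne_zero_iff.2 hy)]
  change M < √(1 + ‖L ((M / ‖L y‖) • y)‖ ^ 2)
  rw [hnorm, sq_abs]
  exact (le_abs_self M).trans_lt (Real.lt_sqrt_of_sq_lt (by rw [sq_abs]; linarith))

end SqrtOneAddNormSq

theorem no_mean_value_function_for_V (n : ℕ) (hn : 1 ≤ n) (a : Fin n → ℝ)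
    (ha : ∀ i, 0 < a i) :
    ¬ ∃ g : ℝ → ℝ, ∀ (q : EuclideanSpace ℝ (Fin n)) (r : ℝ), 0 < r →
      (∫ y in Metric.ball q r, Real.sqrt (1 + 4 * ∑ i, (a i) ^ 2 * (y i) ^ 2)) =
        Real.sqrt (1 + 4 * ∑ i, (a i) ^ 2 * (q i) ^ 2) * g r := by
  have : Nonempty (Fin n) := ⟨⟨0, hn⟩⟩
  set L := Matrix.toEuclideanCLM (𝕜 := ℝ) (Matrix.diagonal fun i => 2 * a i)
  have hL : ∀ y, L y = WithLp.toLp 2 fun i => 2 * a i * y i := fun y => by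
    ext i; simp [L, Matrix.ofLp_toEuclideanCLM, Matrix.mulVec_diagonal]
  have hnormL : ∀ y, 4 * ∑ i, (a i) ^ 2 * (y i) ^ 2 = ‖L y‖ ^ 2 := fun y => by
    rw [EuclideanSpace.real_norm_sq_eq, Finset.mul_sum, hL]
    exact Finset.sum_congr rfl fun i _ => by ring
  have hLinj : Function.Injective L := by
    refine (injective_iff_map_eq_zero L).2 fun y hy => ?_
    ext i
    have := congrArg (· i) ((hL y).symm.trans hy)
    simpa [(ha i).ne'] using this
  obtain ⟨v, hv⟩ := exists_ne (0 : EuclideanSpace ℝ (Fin n))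
  simp_rw [hnormL]
  refine L.lipschitzWith_sqrt_one_add_norm_sq.not_exists_setIntegral_ball_eq_mul volume
    (L.not_bddAbove_sqrt_one_add_norm_sq ((map_ne_zero_iff L hLinj).2 hv))
    (fun y hy => L.sqrt_one_add_norm_sq_lt hLinj hy) ?_
  simp
end

section
/- Let n ≥ 1, let a₁, …, a_n > 0, and let f : ℝⁿ → ℝ be given by f(x) = Σ_{i=1}^n a_i² x_i². Then for every x ∈ ℝⁿ and every k > 0, S*_x(k) = (1/(a₁ a₂ ⋯ a_n)) · ∫_{B(q,√k)} √(1 + 4 Σ_{i=1}^n a_i² y_i²) dy, where q = (a₁ x₁, …, a_n x_n), B(q,√k) is the open ball of radius √k centered at q, and S*_x(k) = ∫_{{y : f(y) < f(x) + ⟨∇f(x), y − x⟩ + k}} √(1 + ‖∇f(y)‖²) dy. -/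
open MeasureTheory
open scoped RealInnerProductSpace

/-!
With `D = diag(a)` we have `f y = ‖D y‖²` and `∇f y = 2 D² y`. Expanding a square,
`f y - f x - ⟪∇f x, y - x⟫ = ‖D y - D x‖²`, so `Φ_x(k) = D⁻¹(B(D x, √k))`, and the integrand is
`√(1 + ‖∇f y‖²) = h (D y)` with `h z = √(1 + 4 ∑ aᵢ² zᵢ²)`. The linear change of variables
`z = D y`, whose Jacobian is `det D = ∏ aᵢ`, turns the integral over `Φ_x(k)` into the one over
the ball.
-/

section ChangeOfVariables

variable {E F : Type*} [NormedAddCommGroup E] [NormedSpace ℝ E] [FiniteDimensional ℝ E]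
  [MeasurableSpace E] [BorelSpace E] (μ : Measure E) [μ.IsAddHaarMeasure]
  [NormedAddCommGroup F] [NormedSpace ℝ F]

theorem setIntegral_preimage_comp_continuousLinearMap {L : E →L[ℝ] E} (hL : L.det ≠ 0)
    (g : E → F) (t : Set E) :
    ∫ y in L ⁻¹' t, g (L y) ∂μ = |L.det|⁻¹ • ∫ z in t, g z ∂μ := by
  let e := (LinearMap.equivOfDetNeZero _ hL).toContinuousLinearEquiv.toHomeomorph.toMeasurableEquiv
  have h := setIntegral_map_equiv (μ := μ) e g t
  rw [show (e : E → E) = L from rfl, ← ContinuousLinearMap.coe_coe,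
    Measure.map_linearMap_addHaar_eq_smul_addHaar μ hL, Measure.restrict_smul,
    integral_smul_measure, ENNReal.toReal_ofReal (abs_nonneg _), abs_inv] at h
  exact h.symm

end ChangeOfVariables

section NormSqComp

open ContinuousLinearMap

variable {E F : Type*} [NormedAddCommGroup E] [InnerProductSpace ℝ E] [CompleteSpace E]
  [NormedAddCommGroup F] [InnerProductSpace ℝ F] [CompleteSpace F] (T : E →L[ℝ] F)

theorem hasGradientAt_norm_sq_comp (y : E) :
    HasGradientAt (fun y => ‖T y‖ ^ 2) ((2 : ℝ) • adjoint T (T y)) y := by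
  rw [hasGradientAt_iff_hasFDerivAt]
  refine T.hasFDerivAt.norm_sq.congr_fderiv ?_
  ext v
  simp [adjoint_inner_left]

theorem norm_sq_comp_eq_tangent_add (x y : E) :
    ‖T y‖ ^ 2 = ‖T x‖ ^ 2 + ⟪gradient (fun y => ‖T y‖ ^ 2) x, y - x⟫ + ‖T y - T x‖ ^ 2 := by
  rw [(hasGradientAt_norm_sq_comp T x).gradient, real_inner_smul_left, adjoint_inner_left,
    map_sub, ← norm_add_sq_real, add_sub_cancel]

theorem setOf_norm_sq_comp_lt_tangent_add (x : E) (k : ℝ) :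
    {y | ‖T y‖ ^ 2 < ‖T x‖ ^ 2 + ⟪gradient (fun y => ‖T y‖ ^ 2) x, y - x⟫ + k} =
      T ⁻¹' Metric.ball (T x) (Real.sqrt k) := by
  ext y
  rw [Set.mem_ofPred_eq, norm_sq_comp_eq_tangent_add T x y, Set.mem_preimage, Metric.mem_ball,
    dist_eq_norm, Real.lt_sqrt (norm_nonneg _)]
  constructor <;> intro h <;> linarith

end NormSqComp

section Diagonal

open Matrix

variable {ι : Type*} [Fintype ι] [DecidableEq ι]

theorem det_toEuclideanCLM (A : Matrix ι ι ℝ) :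
    (toEuclideanCLM (𝕜 := ℝ) A).det = A.det := by
  rw [ContinuousLinearMap.det, coe_toEuclideanCLM_eq_toEuclideanLin,
    toEuclideanLin_eq_toLin_orthonormal, LinearMap.det_toLin]

theorem adjoint_toEuclideanCLM_diagonal (a : ι → ℝ) :
    ContinuousLinearMap.adjoint (toEuclideanCLM (𝕜 := ℝ) (diagonal a)) =
      toEuclideanCLM (𝕜 := ℝ) (diagonal a) := by
  rw [← ContinuousLinearMap.star_eq_adjoint, ← map_star, star_eq_conjTranspose,
    diagonal_conjTranspose, star_trivial]

theorem toEuclideanCLM_diagonal_apply (a : ι → ℝ) (y : EuclideanSpace ℝ ι) (i : ι) :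
    toEuclideanCLM (𝕜 := ℝ) (diagonal a) y i = a i * y i := by
  simp [mulVec_diagonal]

theorem norm_sq_toEuclideanCLM_diagonal_apply (a : ι → ℝ) (y : EuclideanSpace ℝ ι) :
    ‖toEuclideanCLM (𝕜 := ℝ) (diagonal a) y‖ ^ 2 = ∑ i, a i ^ 2 * y i ^ 2 := by
  simp only [EuclideanSpace.real_norm_sq_eq, toEuclideanCLM_diagonal_apply, mul_pow]

end Diagonal

theorem paraboloid_surface_area_as_ball_integral_general (n : ℕ) (a : Fin n → ℝ)
    (ha : ∀ i, 0 < a i) (f : EuclideanSpace ℝ (Fin n) → ℝ)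
    (hf : ∀ x, f x = ∑ i, (a i) ^ 2 * (x i) ^ 2)
    (x : EuclideanSpace ℝ (Fin n)) (k : ℝ) :
    (∫ y in {y | f y < f x + ⟪gradient f x, y - x⟫ + k},
        Real.sqrt (1 + ‖gradient f y‖ ^ 2)) =
      (1 / ∏ i, a i) *
        ∫ y in Metric.ball (show EuclideanSpace ℝ (Fin n) from WithLp.toLp 2 fun i => a i * x i)
            (Real.sqrt k),
          Real.sqrt (1 + 4 * ∑ i, (a i) ^ 2 * (y i) ^ 2) := by
  set D := Matrix.toEuclideanCLM (𝕜 := ℝ) (Matrix.diagonal a)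
  obtain rfl : f = fun y => ‖D y‖ ^ 2 :=
    funext fun y => by rw [hf, norm_sq_toEuclideanCLM_diagonal_apply]
  have hcenter : (WithLp.toLp 2 fun i => a i * x i : EuclideanSpace ℝ (Fin n)) = D x := by
    ext i
    exact (toEuclideanCLM_diagonal_apply a x i).symm
  have hintegrand (y) : √(1 + ‖gradient (fun y => ‖D y‖ ^ 2) y‖ ^ 2) =
      √(1 + 4 * ∑ i, a i ^ 2 * D y i ^ 2) := by
    rw [(hasGradientAt_norm_sq_comp D y).gradient, adjoint_toEuclideanCLM_diagonal, norm_smul,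
      mul_pow, norm_sq_toEuclideanCLM_diagonal_apply]
    norm_num
  have hdet : D.det = ∏ i, a i := by rw [det_toEuclideanCLM, Matrix.det_diagonal]
  have hprod : 0 < ∏ i, a i := Finset.prod_pos fun i _ => ha i
  rw [setOf_norm_sq_comp_lt_tangent_add, hcenter]
  simp only [hintegrand]
  rw [setIntegral_preimage_comp_continuousLinearMap volume (hdet ▸ hprod.ne')
      (fun z : EuclideanSpace ℝ (Fin n) => √(1 + 4 * ∑ i, a i ^ 2 * z i ^ 2)),
    hdet, abs_of_pos hprod, smul_eq_mul, one_div]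

theorem paraboloid_surface_area_as_ball_integral (n : ℕ) (hn : 1 ≤ n) (a : Fin n → ℝ)
    (ha : ∀ i, 0 < a i) (f : EuclideanSpace ℝ (Fin n) → ℝ)
    (hf : ∀ x, f x = ∑ i, (a i) ^ 2 * (x i) ^ 2)
    (x : EuclideanSpace ℝ (Fin n)) (k : ℝ) (hk : 0 < k) :
    (∫ y in {y | f y < f x + ⟪gradient f x, y - x⟫ + k},
        Real.sqrt (1 + ‖gradient f y‖ ^ 2)) =
      (1 / ∏ i, a i) *
        ∫ y in Metric.ball (show EuclideanSpace ℝ (Fin n) from WithLp.toLp 2 fun i => a i * x i)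
            (Real.sqrt k),
          Real.sqrt (1 + 4 * ∑ i, (a i) ^ 2 * (y i) ^ 2) :=
  paraboloid_surface_area_as_ball_integral_general n a ha f hf x k
end
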